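/- arXiv:1511.07505 — 3 statements merged into one kernel-verified Lean document; each statement's English description precedes it below -/
import Mathlib

section
/- Let A₁, A₂ be unital ℂ-algebras, let S, T ∈ A₁ be not nilpotent, let Q ∈ A₂ be nonzero, let p ∈ ℂ[x,y], λ ∈ ℂ, and l, m ≥ 1. If (p^l)⟦S + λ·1, T⟧ = 0 in A₁ and (Q − λ·1)^m = 0 in A₂, then (p^n)⟦S⊗1 + 1⊗Q, T⊗1⟧ = 0 in the algebraic tensor product A₁ ⊗ A₂, where n = l + m − 1. -/
open scoped TensorProduct

/-- Ordered evaluation: for `p = Σ c_{ij} x^i y^j ∈ ℂ[x,y]` and `S, T` in a unital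
ℂ-algebra, `oev p S T = Σ c_{ij} S^i T^j`, keeping all powers of `S` to the left. -/
noncomputable def oev {A : Type*} [Ring A] [Algebra ℂ A]
    (p : MvPolynomial (Fin 2) ℂ) (S T : A) : A :=
  ∑ m ∈ p.support, p.coeff m • (S ^ m 0 * T ^ m 1)

/-!
Put `U = (S + λ) ⊗ 1`, `N = 1 ⊗ (Q - λ)` and `V = T ⊗ 1`, so that `N` commutes with `U`,
`N ^ m = 0` and `S ⊗ 1 + 1 ⊗ Q = N + U`. Ordered evaluation at `(N + U, V)` factors through the
substitution `q(x, y) ↦ q(t + x, y)` into `ℂ[t, x, y]`, followed by the ordered evaluation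
`t^k x^i y^j ↦ N^k U^i V^j`. Since `N` and `U` commute, multiplying by a variable acts on values
by a linear map, so the kernel of this evaluation contains the ideal `(p(x, y)^l, t^m)`.
As `p(t + x, y) ≡ p(x, y)` modulo `t`, the binomial theorem puts `p(t + x, y)^(l + m - 1)`
in that ideal.
-/

namespace MvPolynomial

variable {σ R M : Type*} [CommSemiring R] [AddCommMonoid M] [Module R M]
  {f g : MvPolynomial σ R →ₗ[R] M}

theorem linearMap_ext_of_X_mul (φ : σ → M →ₗ[R] M) (hf : ∀ i q, f (X i * q) = φ i (f q))
    (hg : ∀ i q, g (X i * q) = φ i (g q)) (h1 : f 1 = g 1) : f = g := by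
  refine LinearMap.ext fun q => ?_
  induction q using MvPolynomial.induction_on with
  | C a => rw [← mul_one (C a), ← smul_eq_C_mul, map_smul, map_smul, h1]
  | add q r hq hr => rw [map_add, map_add, hq, hr]
  | mul_X q i hq => rw [mul_comm, hf, hg, hq]

theorem map_mul_eq_zero (hf : ∀ i q, f q = 0 → f (X i * q) = 0) (g : MvPolynomial σ R)
    {q : MvPolynomial σ R} (hq : f q = 0) : f (g * q) = 0 := by
  induction g using MvPolynomial.induction_on generalizing q with
  | C a => rw [← smul_eq_C_mul, map_smul, hq, smul_zero]
  | add g h hg hh => rw [add_mul, map_add, hg hq, hh hq, add_zero]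
  | mul_X g i hg => rw [mul_comm g, mul_assoc]; exact hf i _ (hg hq)

theorem map_eq_zero_of_mem_span (hf : ∀ i q, f q = 0 → f (X i * q) = 0)
    {s : Set (MvPolynomial σ R)} (hs : ∀ q ∈ s, f q = 0) {q : MvPolynomial σ R}
    (hq : q ∈ Ideal.span s) : f q = 0 := by
  induction hq using Submodule.span_induction with
  | mem q hq => exact hs q hq
  | zero => exact map_zero f
  | add q r _ _ hq hr => rw [map_add, hq, hr, add_zero]
  | smul g q _ hq => exact map_mul_eq_zero hf g hq

theorem aeval_X_add_sub_rename_mem_span {R : Type*} [CommRing R] (q : MvPolynomial (Fin 2) R) :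
    aeval ![X 0 + X 1, X 2] q - rename Fin.succ q ∈
      Ideal.span {(X 0 : MvPolynomial (Fin 3) R)} := by
  rw [← Ideal.Quotient.eq, ← Ideal.Quotient.mkₐ_eq_mk R, ← AlgHom.comp_apply,
    ← AlgHom.comp_apply]
  congr 1
  ext i
  fin_cases i <;> simp

end MvPolynomial

section OrderedEvaluation

open MvPolynomial

variable {A : Type*} [Ring A] [Algebra ℂ A]

noncomputable def oev₃ (N U V : A) : MvPolynomial (Fin 3) ℂ →ₗ[ℂ] A :=
  (basisMonomials (Fin 3) ℂ).constr ℂ fun s => N ^ s 0 * U ^ s 1 * V ^ s 2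

theorem oev₃_monomial (N U V : A) (s : Fin 3 →₀ ℕ) (c : ℂ) :
    oev₃ N U V (monomial s c) = c • (N ^ s 0 * U ^ s 1 * V ^ s 2) := by
  rw [← mul_one c, ← smul_eq_mul, ← smul_monomial, map_smul, smul_eq_mul, mul_one,
    show monomial s (1 : ℂ) = basisMonomials (Fin 3) ℂ s from rfl, oev₃,
    Module.Basis.constr_basis]

theorem oev₃_X_mul {N U V : A} (hNU : Commute N U) (i : Fin 3) (q : MvPolynomial (Fin 3) ℂ) :
    oev₃ N U V (X i * q) =
      ![LinearMap.mulLeft ℂ N, LinearMap.mulLeft ℂ U, LinearMap.mulRight ℂ V] i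
        (oev₃ N U V q) := by
  induction q using MvPolynomial.induction_on' with
  | monomial s c =>
    rw [X, monomial_mul, one_mul, oev₃_monomial, oev₃_monomial]
    fin_cases i <;> simp [pow_add, mul_assoc, ((hNU.pow_left _).symm).left_comm, pow_mul_comm']
  | add q r hq hr => rw [mul_add, map_add, map_add, hq, hr, map_add]

theorem oev_eq_constr (q : MvPolynomial (Fin 2) ℂ) (U V : A) :
    oev q U V = (basisMonomials (Fin 2) ℂ).constr ℂ (fun s => U ^ s 0 * V ^ s 1) q := by
  rw [Module.Basis.constr_apply]; rfl

theorem oev_eq_oev₃_rename (N U V : A) (q : MvPolynomial (Fin 2) ℂ) :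
    oev q U V = oev₃ N U V (rename Fin.succ q) := by
  suffices (basisMonomials (Fin 2) ℂ).constr ℂ (fun s => U ^ s 0 * V ^ s 1) =
      oev₃ N U V ∘ₗ (rename Fin.succ).toLinearMap by
    rw [oev_eq_constr, this]; rfl
  refine (basisMonomials (Fin 2) ℂ).ext fun s => ?_
  rw [Module.Basis.constr_basis, coe_basisMonomials, LinearMap.comp_apply, AlgHom.toLinearMap_apply,
    rename_monomial, oev₃_monomial]
  have hzero : s.mapDomain Fin.succ 0 = 0 := Finsupp.mapDomain_of_notMem_range _ _ (by simp)
  have hsucc (i : Fin 2) : s.mapDomain Fin.succ i.succ = s i :=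
    Finsupp.mapDomain_apply (Fin.succ_injective 2) s i
  rw [show (1 : Fin 3) = Fin.succ 0 from rfl, show (2 : Fin 3) = Fin.succ 1 from rfl, hsucc, hsucc,
    hzero, pow_zero, one_mul, one_smul]

theorem oev₃_one (N U V : A) : oev₃ N U V 1 = 1 := by
  rw [← C_1, ← monomial_zero', oev₃_monomial]; simp

theorem oev₃_aeval_shift {N U V : A} (hNU : Commute N U) (q : MvPolynomial (Fin 2) ℂ) :
    oev₃ N U V (aeval ![X 0 + X 1, X 2] q) = oev q (N + U) V := by
  rw [oev_eq_oev₃_rename 1]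
  refine LinearMap.congr_fun (f := oev₃ N U V ∘ₗ (aeval ![X 0 + X 1, X 2]).toLinearMap)
    (g := oev₃ 1 (N + U) V ∘ₗ (rename Fin.succ).toLinearMap)
    (linearMap_ext_of_X_mul ![LinearMap.mulLeft ℂ (N + U), LinearMap.mulRight ℂ V] ?_ ?_ ?_) q
  · intro i q
    rw [LinearMap.comp_apply, AlgHom.toLinearMap_apply, map_mul, aeval_X]
    fin_cases i
    · simp [add_mul, oev₃_X_mul hNU]
    · simp [oev₃_X_mul hNU]
  · intro i q
    rw [LinearMap.comp_apply, AlgHom.toLinearMap_apply, map_mul, rename_X,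
      oev₃_X_mul (Commute.one_left _)]
    fin_cases i <;> rfl
  · simp [oev₃_one]

theorem oev_pow_add_eq_zero {N U V : A} (hNU : Commute N U) {p : MvPolynomial (Fin 2) ℂ}
    {l m : ℕ} (hp : oev (p ^ l) U V = 0) (hN : N ^ m = 0) :
    oev (p ^ (l + m - 1)) (N + U) V = 0 := by
  have hmem : aeval ![X 0 + X 1, X 2] p ^ (l + m - 1) ∈
      Ideal.span {rename Fin.succ p ^ l, X 0 ^ m} := by
    obtain ⟨r, hr⟩ := Ideal.mem_span_singleton'.1 (aeval_X_add_sub_rename_mem_span p)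
    rw [← add_sub_cancel (rename Fin.succ p) (aeval _ p), ← hr]
    refine Ideal.add_pow_add_pred_mem_of_pow_mem _ (Ideal.subset_span (Set.mem_insert _ _)) ?_
    rw [mul_pow]
    exact Ideal.mul_mem_left _ _ (Ideal.subset_span (Set.mem_insert_of_mem _ rfl))
  rw [← oev₃_aeval_shift hNU, map_pow]
  refine map_eq_zero_of_mem_span (fun i q hq => by rw [oev₃_X_mul hNU, hq, map_zero]) ?_ hmem
  rintro q (rfl | rfl)
  · rw [← map_pow, ← oev_eq_oev₃_rename, hp]
  · simp [X_pow_eq_monomial, oev₃_monomial, hN]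

end OrderedEvaluation

theorem oev_map {A B : Type*} [Ring A] [Algebra ℂ A] [Ring B] [Algebra ℂ B]
    (f : A →ₐ[ℂ] B) (p : MvPolynomial (Fin 2) ℂ) (S T : A) :
    oev p (f S) (f T) = f (oev p S T) := by
  simp only [oev, map_sum, map_smul, map_mul, map_pow]

theorem nilpotent_perturbation_general
    {A₁ A₂ : Type*} [Ring A₁] [Algebra ℂ A₁] [Ring A₂] [Algebra ℂ A₂]
    (S T : A₁) (Q : A₂)
    (p : MvPolynomial (Fin 2) ℂ) (lam : ℂ) (l m : ℕ)
    (h₁ : oev (p ^ l) (S + lam • 1) T = 0) (h₂ : (Q - lam • 1) ^ m = 0) :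
    oev (p ^ (l + m - 1))
      (S ⊗ₜ[ℂ] (1 : A₂) + (1 : A₁) ⊗ₜ[ℂ] Q) (T ⊗ₜ[ℂ] (1 : A₂)) = 0 := by
  have hU : oev (p ^ l) ((S + lam • 1) ⊗ₜ[ℂ] (1 : A₂)) (T ⊗ₜ[ℂ] (1 : A₂)) = 0 := by
    have h := oev_map (Algebra.TensorProduct.includeLeft (R := ℂ) (S := ℂ) (B := A₂))
      (p ^ l) (S + lam • 1) T
    rwa [h₁, map_zero] at h
  have hN : ((1 : A₁) ⊗ₜ[ℂ] (Q - lam • 1)) ^ m = 0 := by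
    rw [← Algebra.TensorProduct.includeRight_apply, ← map_pow, h₂, map_zero]
  have hsum : S ⊗ₜ[ℂ] (1 : A₂) + (1 : A₁) ⊗ₜ[ℂ] Q =
      (1 : A₁) ⊗ₜ[ℂ] (Q - lam • 1) + (S + lam • 1) ⊗ₜ[ℂ] (1 : A₂) := by
    rw [TensorProduct.tmul_sub, TensorProduct.add_tmul, TensorProduct.smul_tmul]
    abel
  rw [hsum]
  exact oev_pow_add_eq_zero (Commute.tmul (Commute.one_left _) (Commute.one_right _)) hU hN

/-- Proposition 6.1: if `(p^l)⟦S + λ·1, T⟧ = 0` and `(Q − λ·1)^m = 0` (with `S, T` not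
nilpotent and `Q ≠ 0`), then `(p^n)⟦S⊗1 + 1⊗Q, T⊗1⟧ = 0` where `n = l + m − 1`. -/
theorem nilpotent_perturbation
    {A₁ A₂ : Type*} [Ring A₁] [Algebra ℂ A₁] [Ring A₂] [Algebra ℂ A₂]
    (S T : A₁) (Q : A₂) (hS : ¬IsNilpotent S) (hT : ¬IsNilpotent T) (hQ : Q ≠ 0)
    (p : MvPolynomial (Fin 2) ℂ) (lam : ℂ) (l m : ℕ) (hl : 1 ≤ l) (hm : 1 ≤ m)
    (h₁ : oev (p ^ l) (S + lam • 1) T = 0) (h₂ : (Q - lam • 1) ^ m = 0) :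
    oev (p ^ (l + m - 1))
      (S ⊗ₜ[ℂ] (1 : A₂) + (1 : A₁) ⊗ₜ[ℂ] Q) (T ⊗ₜ[ℂ] (1 : A₂)) = 0 :=
  nilpotent_perturbation_general S T Q p lam l m h₁ h₂
end

section
/- Let X and Y be nonzero complex Banach spaces, let S, T ∈ B(X) be not both zero, let Q ∈ B(Y) be nonzero, and let n ≥ 1. Then the following are equivalent in the algebraic tensor product B(X) ⊗ B(Y): (a) S⊗I_Y + I_X⊗Q is a strict left n-inverse of T⊗I_Y; (b) there exist positive integers l, m with l + m = n + 1 and λ ∈ ℂ such that S + λI_X is a strict left l-inverse of T in B(X), and Q − λI_Y is nilpotent of order exactly m, i.e. (Q − λI_Y)^m = 0 and (Q − λI_Y)^{m−1} ≠ 0. -/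
open scoped TensorProduct

/-- `β_n(S,T) = Σ_{k=0}^n (−1)^{n−k} C(n,k) S^k T^k`. -/
noncomputable def beta {A : Type*} [Ring A] (n : ℕ) (S T : A) : A :=
  ∑ k ∈ Finset.range (n + 1), ((-1 : ℤ) ^ (n - k) * (n.choose k : ℤ)) • (S ^ k * T ^ k)

/-!
With `L_{S,T} W = S W T` one has `β_n(S,T) = (L_{S,T} - 1)^n 1`. For any shift `λ` and
`N = Q - λ`, the binomial theorem for the commuting operators `L_{S⊗1,T⊗1} - 1` and
`L_{1⊗N,T⊗1}` gives
`β_n(S⊗1 + 1⊗Q, T⊗1) = Σ_j C(n,j) (β_{n-j}(S+λ,T) T^j) ⊗ N^j`.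
Slicing with a functional `f` on the left factor turns a vanishing of this sum into a
polynomial `p` with `p(N) = 0` whose coefficients are `C(n,j) f(β_{n-j}(S+λ,T) T^j)`.
For `λ ∈ σ(Q)` this gives `p(0) = 0`, hence `β_n(S+λ,T) = 0`; as two distinct shifts of `S`
cannot both be left `n`-inverses of `T`, `σ(Q) = {λ}`. If `S+λ` is a strict left
`l`-inverse, then `p = X^m r` with `m = n + 1 - l` and `r(0) ≠ 0`, and `r(N)` is invertible by
spectral mapping, so `N^m = 0`. The converse, and the exactness of both orders, are read off
the expansion, in which at most the term `j = m - 1` of `β_{n-1}` survives.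
-/

open Finset

section Ring

variable {A : Type*} [Ring A]

theorem mulLeftRight_pow_apply (S T x : A) (k : ℕ) :
    (LinearMap.mulLeftRight ℤ (S, T) ^ k) x = S ^ k * x * T ^ k := by
  induction k with
  | zero => simp
  | succ k ih =>
    rw [pow_succ', Module.End.mul_apply, ih, LinearMap.mulLeftRight_apply, pow_succ', pow_succ]
    noncomm_ring

theorem beta_eq_mulLeftRight_sub_one_pow_apply_one (n : ℕ) (S T : A) :
    beta n S T = ((LinearMap.mulLeftRight ℤ (S, T) - 1) ^ n) 1 := by
  rw [sub_eq_add_neg, (Commute.neg_one_right _).add_pow, LinearMap.sum_apply, beta]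
  refine sum_congr rfl fun k _ => ?_
  have hcoeff : (-1 : Module.End ℤ A) ^ (n - k) * (n.choose k : Module.End ℤ A) =
      (((-1 : ℤ) ^ (n - k) * n.choose k : ℤ) : Module.End ℤ A) := by
    push_cast; rfl
  rw [mul_assoc, hcoeff, Module.End.mul_apply, Module.End.intCast_apply, map_zsmul,
    mulLeftRight_pow_apply, mul_one]

theorem beta_zero (S T : A) : beta 0 S T = 1 := by simp [beta]

theorem beta_succ (n : ℕ) (S T : A) : beta (n + 1) S T = S * beta n S T * T - beta n S T := by
  rw [beta_eq_mulLeftRight_sub_one_pow_apply_one, beta_eq_mulLeftRight_sub_one_pow_apply_one,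
    pow_succ', Module.End.mul_apply, LinearMap.sub_apply, LinearMap.mulLeftRight_apply,
    Module.End.one_apply]

theorem beta_eq_zero_of_le {l j : ℕ} {S T : A} (h : beta l S T = 0) (hlj : l ≤ j) :
    beta j S T = 0 := by
  induction j, hlj using Nat.le_induction with
  | base => exact h
  | succ j _ ih => rw [beta_succ, ih, mul_zero, zero_mul, sub_zero]

theorem exists_beta_eq_mul_add_neg_one_pow (n : ℕ) (S T : A) :
    ∃ Y, beta n S T = Y * T + (-1) ^ n := by
  induction n with
  | zero => exact ⟨0, by simp [beta_zero]⟩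
  | succ n ih =>
    obtain ⟨Y, hY⟩ := ih
    refine ⟨S * Y * T + (-1) ^ n * S - Y, ?_⟩
    rw [beta_succ, hY, pow_succ]
    rcases neg_one_pow_eq_or A n with h | h <;> rw [h] <;> noncomm_ring

theorem isLeftRegular_of_beta_eq_zero {n : ℕ} {S T : A} (h : beta n S T = 0) :
    IsLeftRegular T := by
  obtain ⟨Y, hY⟩ := exists_beta_eq_mul_add_neg_one_pow n S T
  have hYT : Y * T = -(-1) ^ n := eq_neg_of_add_eq_zero_left (hY ▸ h)
  refine isLeftRegular_of_mul_eq_one (b := -((-1) ^ n * Y)) ?_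
  rw [neg_mul, mul_assoc, hYT, mul_neg, neg_neg, ← pow_add, ← two_mul, pow_mul, neg_one_sq,
    one_pow]

theorem pow_ne_zero_of_beta_eq_zero [Nontrivial A] {n : ℕ} {S T : A}
    (h : beta n S T = 0) (k : ℕ) : T ^ k ≠ 0 :=
  ((isLeftRegular_of_beta_eq_zero h).pow k).ne_zero

theorem beta_mul_pow_ne_zero {l : ℕ} {S T : A} (h : beta (l + 1) S T = 0)
    (h' : beta l S T ≠ 0) (k : ℕ) : beta l S T * T ^ k ≠ 0 := by
  have hfix : Function.IsFixedPt (LinearMap.mulLeftRight ℤ (S, T)) (beta l S T) := by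
    rw [beta_succ, sub_eq_zero] at h
    exact (LinearMap.mulLeftRight_apply S T _).trans h
  intro hk
  apply h'
  rw [← (hfix.iterate k).eq, ← Module.End.pow_apply, mulLeftRight_pow_apply, mul_assoc, hk,
    mul_zero]

theorem exists_beta_succ_eq_zero_and_beta_ne_zero [Nontrivial A] {n : ℕ} {S T : A}
    (h : beta n S T = 0) : ∃ l < n, beta (l + 1) S T = 0 ∧ beta l S T ≠ 0 := by
  induction n with
  | zero => exact absurd h (by simp [beta_zero])
  | succ n ih =>
    by_cases hn : beta n S T = 0
    · obtain ⟨l, hl, hl'⟩ := ih hn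
      exact ⟨l, by omega, hl'⟩
    · exact ⟨n, by omega, h, hn⟩

theorem beta_add_of_commute {U V : A} (hUV : Commute U V) (n : ℕ) (W : A) :
    beta n (U + V) W = ∑ j ∈ range (n + 1), n.choose j • (V ^ j * beta (n - j) U W * W ^ j) := by
  have hsplit : LinearMap.mulLeftRight ℤ (U + V, W) - 1 =
      LinearMap.mulLeftRight ℤ (V, W) + (LinearMap.mulLeftRight ℤ (U, W) - 1) := by
    ext x
    simp only [LinearMap.sub_apply, LinearMap.add_apply, LinearMap.mulLeftRight_apply, add_mul]
    abel
  have hcomm :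
      Commute (LinearMap.mulLeftRight ℤ (V, W)) (LinearMap.mulLeftRight ℤ (U, W) - 1) := by
    refine Commute.sub_right ?_ (Commute.one_right _)
    ext x
    simp only [Module.End.mul_apply, LinearMap.mulLeftRight_apply, ← mul_assoc, hUV.eq]
  rw [beta_eq_mulLeftRight_sub_one_pow_apply_one, hsplit, hcomm.add_pow, LinearMap.sum_apply]
  refine sum_congr rfl fun j _ => ?_
  rw [Module.End.mul_apply, Module.End.mul_apply, Module.End.natCast_apply, map_nsmul, map_nsmul,
    ← beta_eq_mulLeftRight_sub_one_pow_apply_one, mulLeftRight_pow_apply]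

theorem map_beta {B F : Type*} [Ring B] [FunLike F A B] [RingHomClass F A B] (f : F) (n : ℕ)
    (S T : A) : f (beta n S T) = beta n (f S) (f T) := by
  simp [beta, map_sum, map_mul, map_pow]

end Ring

theorem Commute.add_pow_apply_eq_zero_of_add_le_succ {R M : Type*} [Semiring R] [AddCommMonoid M]
    [Module R M] {f g : Module.End R M} (hfg : Commute f g) {x : M} {a b k : ℕ}
    (hf : (f ^ a) x = 0) (hg : (g ^ b) x = 0) (hk : a + b ≤ k + 1) : ((f + g) ^ k) x = 0 := by
  rw [hfg.add_pow, LinearMap.sum_apply]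
  refine sum_eq_zero fun i _ => ?_
  rw [Module.End.mul_apply, Module.End.natCast_apply, map_nsmul]
  refine smul_eq_zero_of_right _ ?_
  rcases le_or_gt a i with hai | hia
  · rw [(hfg.pow_pow i (k - i)).eq, Module.End.mul_apply, ← Nat.sub_add_cancel hai, pow_add,
      Module.End.mul_apply, hf, map_zero, map_zero]
  · rw [Module.End.mul_apply, ← Nat.sub_add_cancel (show b ≤ k - i by omega), pow_add,
      Module.End.mul_apply, hg, map_zero, map_zero]

/-- Both `L_{S+a,T} - 1` and `L_{S+b,T} - 1` kill `1` after `n` steps and they commute, so their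
difference, right multiplication by `(a - b) T`, kills `1` after `2n - 1` steps; but `T` is left
invertible. -/
theorem eq_of_beta_add_smul_one_eq_zero {𝕜 A : Type*} [Field 𝕜] [Ring A] [Algebra 𝕜 A]
    [Nontrivial A] {n : ℕ} {S T : A} {a b : 𝕜}
    (ha : beta n (S + a • 1) T = 0) (hb : beta n (S + b • 1) T = 0) : a = b := by
  set f := LinearMap.mulLeftRight ℤ (S + a • 1, T) - 1
  set g := -(LinearMap.mulLeftRight ℤ (S + b • 1, T) - 1)
  have hfg : Commute f g := by
    refine ((Commute.sub_left ?_ (Commute.one_left _)).sub_right (Commute.one_right _)).neg_right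
    ext x
    simp only [Module.End.mul_apply, LinearMap.mulLeftRight_apply, add_mul, mul_add,
      smul_mul_assoc, mul_smul_comm, one_mul, smul_add, smul_smul, mul_comm a b]
    noncomm_ring
  have hsum : f + g = LinearMap.mulRight ℤ ((a - b) • T) := by
    ext x
    simp only [f, g, LinearMap.add_apply, LinearMap.neg_apply, LinearMap.sub_apply,
      LinearMap.mulLeftRight_apply, LinearMap.mulRight_apply, Module.End.one_apply, add_mul,
      smul_mul_assoc, one_mul, mul_smul_comm, sub_smul, mul_sub]
    abel
  have hzero := hfg.add_pow_apply_eq_zero_of_add_le_succ (x := 1) (k := 2 * n - 1)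
    ((beta_eq_mulLeftRight_sub_one_pow_apply_one n _ _).symm.trans ha)
    (by rw [neg_pow, Module.End.mul_apply, ← beta_eq_mulLeftRight_sub_one_pow_apply_one, hb,
      map_zero]) (by omega)
  rw [hsum, LinearMap.pow_mulRight, LinearMap.mulRight_apply, one_mul, smul_pow] at hzero
  by_contra hab
  exact pow_ne_zero_of_beta_eq_zero ha _
    ((smul_eq_zero.mp hzero).resolve_left (pow_ne_zero _ (sub_ne_zero.mpr hab)))

section TensorProduct

open TensorProduct

variable {R A B : Type*} [CommRing R] [Ring A] [Ring B] [Algebra R A] [Algebra R B]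

theorem tmul_one_add_one_tmul_eq_add_smul_one (S : A) (Q : B) (c : R) :
    S ⊗ₜ[R] (1 : B) + (1 : A) ⊗ₜ[R] Q = (S + c • 1) ⊗ₜ[R] (1 : B) + (1 : A) ⊗ₜ[R] (Q - c • 1) := by
  rw [add_tmul, tmul_sub, smul_tmul]
  abel

theorem beta_tmul_one_add_one_tmul (n : ℕ) (S T : A) (N : B) :
    beta n (S ⊗ₜ[R] (1 : B) + (1 : A) ⊗ₜ[R] N) (T ⊗ₜ[R] (1 : B)) =
      ∑ j ∈ range (n + 1), n.choose j • ((beta (n - j) S T * T ^ j) ⊗ₜ[R] (N ^ j)) := by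
  have hcomm : Commute (S ⊗ₜ[R] (1 : B)) ((1 : A) ⊗ₜ[R] N) := by
    simp [Commute, SemiconjBy, Algebra.TensorProduct.tmul_mul_tmul]
  rw [beta_add_of_commute hcomm]
  refine sum_congr rfl fun j _ => ?_
  have hS := map_beta (Algebra.TensorProduct.includeLeft (R := R) (S := R) (B := B)) (n - j) S T
  simp only [Algebra.TensorProduct.includeLeft_apply] at hS
  rw [← hS, Algebra.TensorProduct.tmul_pow, Algebra.TensorProduct.tmul_pow, one_pow, one_pow,
    Algebra.TensorProduct.tmul_mul_tmul, Algebra.TensorProduct.tmul_mul_tmul, one_mul, mul_one,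
    mul_one]

theorem beta_tmul_one_add_one_tmul_eq_zero {l m n : ℕ} {S T : A} {N : B}
    (hl : beta l S T = 0) (hm : N ^ m = 0) (hlmn : l + m ≤ n + 1) :
    beta n (S ⊗ₜ[R] (1 : B) + (1 : A) ⊗ₜ[R] N) (T ⊗ₜ[R] (1 : B)) = 0 := by
  rw [beta_tmul_one_add_one_tmul]
  refine sum_eq_zero fun j hj => ?_
  rcases le_or_gt m j with hmj | hjm
  · rw [pow_eq_zero_of_le hmj hm, tmul_zero, smul_zero]
  · rw [beta_eq_zero_of_le hl (by rw [mem_range] at hj; omega), zero_mul, zero_tmul, smul_zero]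

theorem beta_tmul_one_add_one_tmul_eq_choose_smul {l m : ℕ} {S T : A} {N : B}
    (hl : beta (l + 1) S T = 0) (hm : N ^ (m + 1) = 0) :
    beta (l + m) (S ⊗ₜ[R] (1 : B) + (1 : A) ⊗ₜ[R] N) (T ⊗ₜ[R] (1 : B)) =
      (l + m).choose m • ((beta l S T * T ^ m) ⊗ₜ[R] (N ^ m)) := by
  rw [beta_tmul_one_add_one_tmul, sum_eq_single_of_mem m (by simp), Nat.add_sub_cancel]
  intro j _ hjm
  rcases le_or_gt (m + 1) j with hmj | hjm'
  · rw [pow_eq_zero_of_le hmj hm, tmul_zero, smul_zero]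
  · rw [beta_eq_zero_of_le hl (by omega), zero_mul, zero_tmul, smul_zero]

end TensorProduct

theorem TensorProduct.tmul_ne_zero {K V W : Type*} [Field K] [AddCommGroup V] [Module K V]
    [AddCommGroup W] [Module K W] {v : V} {w : W} (hv : v ≠ 0) (hw : w ≠ 0) :
    v ⊗ₜ[K] w ≠ 0 := by
  obtain ⟨f, hf⟩ := Module.Projective.exists_dual_ne_zero K hv
  intro h
  have hfw := congrArg ((TensorProduct.lid K W).toLinearMap ∘ₗ f.rTensor W) h
  simp only [LinearMap.comp_apply, LinearMap.rTensor_tmul, map_zero] at hfw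
  exact hw ((smul_eq_zero.mp hfw).resolve_left hf)

open scoped Pointwise in
theorem spectrum_sub_smul_one_eq {R B : Type*} [CommRing R] [Ring B] [Algebra R B] (a : B)
    (c : R) : spectrum R (a - c • 1) = spectrum R a - ({c} : Set R) := by
  rw [← Algebra.algebraMap_eq_smul_one, spectrum.sub_singleton_eq]

section Field

open Polynomial TensorProduct
open scoped Pointwise

variable {𝕜 A B : Type*} [Field 𝕜] [Ring A] [Ring B] [Algebra 𝕜 A] [Algebra 𝕜 B]

noncomputable def betaPoly (f : Module.Dual 𝕜 A) (n : ℕ) (S T : A) : 𝕜[X] :=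
  ∑ j ∈ range (n + 1), monomial j (n.choose j * f (beta (n - j) S T * T ^ j))

theorem coeff_betaPoly (f : Module.Dual 𝕜 A) (n : ℕ) (S T : A) (j : ℕ) :
    (betaPoly f n S T).coeff j = n.choose j * f (beta (n - j) S T * T ^ j) := by
  simp only [betaPoly, finsetSum_coeff, coeff_monomial, sum_ite_eq', mem_range]
  split_ifs with hj
  · rfl
  · rw [Nat.choose_eq_zero_of_lt (by omega), Nat.cast_zero, zero_mul]

theorem aeval_betaPoly (f : Module.Dual 𝕜 A) (n : ℕ) (S T : A) (N : B) :
    aeval N (betaPoly f n S T) =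
      TensorProduct.lid 𝕜 B
        (f.rTensor B (beta n (S ⊗ₜ[𝕜] (1 : B) + (1 : A) ⊗ₜ[𝕜] N) (T ⊗ₜ[𝕜] (1 : B)))) := by
  rw [beta_tmul_one_add_one_tmul, map_sum, map_sum, betaPoly, map_sum]
  refine sum_congr rfl fun j _ => ?_
  rw [aeval_monomial, map_nsmul, map_nsmul, LinearMap.rTensor_tmul, lid_tmul, ← Algebra.smul_def,
    ← Nat.cast_smul_eq_nsmul 𝕜, smul_smul]

theorem eval_eq_zero_of_aeval_eq_zero [Nontrivial B] {a : B} {p : 𝕜[X]} (h : aeval a p = 0)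
    {ν : 𝕜} (hν : ν ∈ spectrum 𝕜 a) : p.eval ν = 0 := by
  have := spectrum.subset_polynomial_aeval a p ⟨ν, hν, rfl⟩
  rwa [h, spectrum.zero_eq, Set.mem_singleton_iff] at this

theorem pow_eq_zero_of_aeval_X_pow_mul_eq_zero [IsAlgClosed 𝕜] {a : B} (ha : spectrum 𝕜 a = {0})
    {m : ℕ} {r : 𝕜[X]} (hr : r.coeff 0 ≠ 0) (h : aeval a (X ^ m * r) = 0) : a ^ m = 0 := by
  have hunit : IsUnit (aeval a r) := by
    rw [← spectrum.zero_notMem_iff 𝕜, spectrum.map_polynomial_aeval_of_nonempty a r (by simp [ha]),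
      ha, Set.image_singleton, Set.mem_singleton_iff, ← coeff_zero_eq_eval_zero]
    exact hr.symm
  rw [map_mul, map_pow, aeval_X] at h
  exact hunit.mul_left_eq_zero.mp h

theorem beta_add_smul_one_eq_zero_of_mem_spectrum [Nontrivial B] {n : ℕ} {S T : A} {Q : B}
    (h : beta n (S ⊗ₜ[𝕜] (1 : B) + (1 : A) ⊗ₜ[𝕜] Q) (T ⊗ₜ[𝕜] (1 : B)) = 0) {c : 𝕜}
    (hc : c ∈ spectrum 𝕜 Q) : beta n (S + c • 1) T = 0 := by
  rw [tmul_one_add_one_tmul_eq_add_smul_one S Q c] at h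
  refine (Module.forall_dual_apply_eq_zero_iff 𝕜 _).mp fun f => ?_
  have h0 : (0 : 𝕜) ∈ spectrum 𝕜 (Q - c • 1) := by
    rw [spectrum_sub_smul_one_eq]
    exact ⟨c, hc, c, rfl, sub_self c⟩
  have := eval_eq_zero_of_aeval_eq_zero (p := betaPoly f n (S + c • 1) T)
    (by rw [aeval_betaPoly, h, map_zero, map_zero]) h0
  rwa [← coeff_zero_eq_eval_zero, coeff_betaPoly, Nat.choose_zero_right, Nat.cast_one, one_mul,
    Nat.sub_zero, pow_zero, mul_one] at this

theorem spectrum_subsingleton_of_beta_eq_zero [Nontrivial A] [Nontrivial B] {n : ℕ} {S T : A}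
    {Q : B} (h : beta n (S ⊗ₜ[𝕜] (1 : B) + (1 : A) ⊗ₜ[𝕜] Q) (T ⊗ₜ[𝕜] (1 : B)) = 0) :
    (spectrum 𝕜 Q).Subsingleton := fun _ hc _ hd =>
  eq_of_beta_add_smul_one_eq_zero (beta_add_smul_one_eq_zero_of_mem_spectrum h hc)
    (beta_add_smul_one_eq_zero_of_mem_spectrum h hd)

theorem pow_sub_smul_one_eq_zero [IsAlgClosed 𝕜] [CharZero 𝕜] {l m n : ℕ} {S T : A} {Q : B}
    {c : 𝕜}
    (h : beta n (S ⊗ₜ[𝕜] (1 : B) + (1 : A) ⊗ₜ[𝕜] Q) (T ⊗ₜ[𝕜] (1 : B)) = 0)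
    (hQ : spectrum 𝕜 Q = {c}) (hl : beta (l + 1) (S + c • 1) T = 0)
    (hl' : beta l (S + c • 1) T ≠ 0) (hlm : l + m = n) : (Q - c • 1) ^ m = 0 := by
  rw [tmul_one_add_one_tmul_eq_add_smul_one S Q c] at h
  obtain ⟨f, hf⟩ := Module.Projective.exists_dual_ne_zero 𝕜 (beta_mul_pow_ne_zero hl hl' m)
  obtain ⟨r, hr⟩ : X ^ m ∣ betaPoly f n (S + c • 1) T := X_pow_dvd_iff.mpr fun d hd => by
    rw [coeff_betaPoly, beta_eq_zero_of_le hl (by omega), zero_mul, map_zero, mul_zero]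
  refine pow_eq_zero_of_aeval_X_pow_mul_eq_zero (r := r) ?_ ?_ ?_
  · rw [spectrum_sub_smul_one_eq, hQ, Set.singleton_sub_singleton, sub_self]
  · have hm := congrArg (coeff · m) hr
    simp only [coeff_betaPoly, coeff_X_pow_mul', le_refl, if_true, Nat.sub_self] at hm
    rw [← hm, show n - m = l by omega]
    exact mul_ne_zero (Nat.cast_ne_zero.mpr (Nat.choose_pos (by omega)).ne') hf
  · rw [← hr, aeval_betaPoly, h, map_zero, map_zero]

end Field

theorem strict_inverse_tensor_sum_general
    {X Y : Type*} [NormedAddCommGroup X] [NormedSpace ℂ X] [Nontrivial X]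
    [NormedAddCommGroup Y] [NormedSpace ℂ Y] [CompleteSpace Y] [Nontrivial Y]
    (S T : X →L[ℂ] X) (Q : Y →L[ℂ] Y)
    (n : ℕ) (hn : 1 ≤ n) :
    (beta n (S ⊗ₜ[ℂ] (1 : Y →L[ℂ] Y) + (1 : X →L[ℂ] X) ⊗ₜ[ℂ] Q)
        (T ⊗ₜ[ℂ] (1 : Y →L[ℂ] Y)) = 0 ∧
      beta (n - 1) (S ⊗ₜ[ℂ] (1 : Y →L[ℂ] Y) + (1 : X →L[ℂ] X) ⊗ₜ[ℂ] Q)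
        (T ⊗ₜ[ℂ] (1 : Y →L[ℂ] Y)) ≠ 0) ↔
      ∃ (l m : ℕ) (lam : ℂ), 0 < l ∧ 0 < m ∧ l + m = n + 1 ∧
        (beta l (S + lam • 1) T = 0 ∧ beta (l - 1) (S + lam • 1) T ≠ 0) ∧
        ((Q - lam • 1) ^ m = 0 ∧ (Q - lam • 1) ^ (m - 1) ≠ 0) := by
  obtain ⟨n, rfl⟩ := Nat.exists_eq_add_of_le' hn
  constructor
  · rintro ⟨hβ, hβ'⟩
    obtain ⟨c, hc⟩ := spectrum.nonempty Q
    have hσ : spectrum ℂ Q = {c} :=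
      (spectrum_subsingleton_of_beta_eq_zero hβ).eq_singleton_of_mem hc
    obtain ⟨l, hln, hl, hl'⟩ :=
      exists_beta_succ_eq_zero_and_beta_ne_zero (beta_add_smul_one_eq_zero_of_mem_spectrum hβ hc)
    refine ⟨l + 1, n + 1 - l, c, l.succ_pos, by omega, by omega, ⟨hl, by simpa using hl'⟩,
      pow_sub_smul_one_eq_zero hβ hσ hl hl' (by omega), fun hN => hβ' ?_⟩
    rw [tmul_one_add_one_tmul_eq_add_smul_one S Q c]
    exact beta_tmul_one_add_one_tmul_eq_zero hl hN (by omega)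
  · rintro ⟨l, m, c, hl0, hm0, hlm, ⟨hl, hl'⟩, hN, hN'⟩
    obtain ⟨l, rfl⟩ := Nat.exists_eq_add_of_le' hl0
    obtain ⟨m, rfl⟩ := Nat.exists_eq_add_of_le' hm0
    obtain rfl : n = l + m := by omega
    rw [tmul_one_add_one_tmul_eq_add_smul_one S Q c]
    simp only [Nat.add_sub_cancel] at hl' hN' ⊢
    refine ⟨beta_tmul_one_add_one_tmul_eq_zero hl hN (by omega), ?_⟩
    rw [beta_tmul_one_add_one_tmul_eq_choose_smul hl hN, ← Nat.cast_smul_eq_nsmul ℂ]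
    exact smul_ne_zero (Nat.cast_ne_zero.mpr (Nat.choose_pos (by omega)).ne')
      (TensorProduct.tmul_ne_zero (beta_mul_pow_ne_zero hl hl' m) hN')

/-- Corollary 6.3: for nonzero complex Banach spaces `X, Y`, `S, T ∈ B(X)` not both
zero and `0 ≠ Q ∈ B(Y)`: the tensor sum `S⊗I + I⊗Q` is a strict left `n`-inverse of
`T⊗I` iff there exist `l, m ≥ 1` with `l + m = n + 1` and `λ ∈ ℂ` such that `S + λI` is
a strict left `l`-inverse of `T` and `Q − λI` is nilpotent of order exactly `m`. -/
theorem strict_inverse_tensor_sum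
    {X Y : Type*} [NormedAddCommGroup X] [NormedSpace ℂ X] [CompleteSpace X] [Nontrivial X]
    [NormedAddCommGroup Y] [NormedSpace ℂ Y] [CompleteSpace Y] [Nontrivial Y]
    (S T : X →L[ℂ] X) (Q : Y →L[ℂ] Y) (hST : ¬(S = 0 ∧ T = 0)) (hQ : Q ≠ 0)
    (n : ℕ) (hn : 1 ≤ n) :
    (beta n (S ⊗ₜ[ℂ] (1 : Y →L[ℂ] Y) + (1 : X →L[ℂ] X) ⊗ₜ[ℂ] Q)
        (T ⊗ₜ[ℂ] (1 : Y →L[ℂ] Y)) = 0 ∧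
      beta (n - 1) (S ⊗ₜ[ℂ] (1 : Y →L[ℂ] Y) + (1 : X →L[ℂ] X) ⊗ₜ[ℂ] Q)
        (T ⊗ₜ[ℂ] (1 : Y →L[ℂ] Y)) ≠ 0) ↔
      ∃ (l m : ℕ) (lam : ℂ), 0 < l ∧ 0 < m ∧ l + m = n + 1 ∧
        (beta l (S + lam • 1) T = 0 ∧ beta (l - 1) (S + lam • 1) T ≠ 0) ∧
        ((Q - lam • 1) ^ m = 0 ∧ (Q - lam • 1) ^ (m - 1) ≠ 0) :=
  strict_inverse_tensor_sum_general S T Q n hn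
end

section
/- Let H be a complex Hilbert space, let T ∈ B(H) be not nilpotent, let λ ∈ ℂ, and let n ≥ 1. If γ_n(T*, λT) = Σ_{k=0}^n (−1)^{n−k} binom(n,k) (T*)^k (λT)^{n−k} = 0 (i.e. λT lies in the n-th Helton class of T*), then |λ| = 1. -/
/-- `γ_n(S,T) = Σ_{k=0}^n (−1)^{n−k} C(n,k) S^k T^{n−k}`. -/
noncomputable def gamma {A : Type*} [Ring A] (n : ℕ) (S T : A) : A :=
  ∑ k ∈ Finset.range (n + 1), ((-1 : ℤ) ^ (n - k) * (n.choose k : ℤ)) • (S ^ k * T ^ (n - k))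

/-! By the binomial theorem, `γ_n(S, T) = (L_S - R_T)^n 1`, where `L_S` and `R_T` are left and
right multiplication, which commute. If `γ_m(S, T) = γ_n(S', T') = 0` with `S, S'` and `T, T'`
commuting, then `L_S - R_T` and `L_{S'} - R_{T'}` commute and each kills `1` after `m`
(resp. `n`) steps, so their difference `L_{S - S'} - R_{T - T'}` kills `1` after `m + n - 1`
steps: `γ_{m+n-1}(S - S', T - T') = 0`.

Taking adjoints in `γ_n(T*, λT) = 0` gives `γ_n(λ̄T*, T) = 0`, and scaling both arguments by
`λ̄` gives `γ_n(λ̄T*, |λ|²T) = 0`. Hence `γ_{2n-1}(0, (1 - |λ|²)T) = 0`, i.e.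
`(1 - |λ|²)^{2n-1} T^{2n-1} = 0`, which forces `|λ| = 1` as `T` is not nilpotent. -/

open LinearMap

theorem Commute.add_pow_apply_eq_zero_of_add_le_succ_of_pow_apply_eq_zero
    {R M : Type*} [Semiring R] [AddCommMonoid M] [Module R M] {u v : Module.End R M}
    (huv : Commute u v) {x : M} {m n k : ℕ} (hu : (u ^ m) x = 0) (hv : (v ^ n) x = 0)
    (h : m + n ≤ k + 1) : ((u + v) ^ k) x = 0 := by
  rw [huv.add_pow', LinearMap.sum_apply]
  refine Finset.sum_eq_zero fun ⟨i, j⟩ hij => ?_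
  suffices (u ^ i * v ^ j) x = 0 by simp [this]
  by_cases hi : m ≤ i
  · rw [(huv.pow_pow i j).eq, Module.End.mul_apply, ← Nat.sub_add_cancel hi, pow_add,
      Module.End.mul_apply, hu, map_zero, map_zero]
  · have hj : n ≤ j := by have := Finset.HasAntidiagonal.mem_antidiagonal.mp hij; omega
    rw [Module.End.mul_apply, ← Nat.sub_add_cancel hj, pow_add, Module.End.mul_apply, hv,
      map_zero, map_zero]

section gamma

variable {A : Type*} [Ring A]

theorem gamma_eq_pow_apply_one (R : Type*) [CommRing R] [Algebra R A] (n : ℕ) (S T : A) :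
    gamma n S T = ((mulLeft R S - mulRight R T) ^ n) 1 := by
  have hneg : -mulRight R T = mulRight R (-T) := by ext; simp
  rw [sub_eq_add_neg, (commute_mulLeft_right (R := R) S T).neg_right.add_pow,
    LinearMap.sum_apply, gamma]
  refine Finset.sum_congr rfl fun k _ => ?_
  rw [hneg, pow_mulLeft, pow_mulRight]
  simp only [Module.End.mul_apply, Module.End.natCast_apply, mulLeft_apply, mulRight_apply,
    neg_pow T]
  simp only [nsmul_eq_mul, zsmul_eq_mul, Int.cast_mul, Int.cast_pow, Int.cast_neg, Int.cast_one,
    Int.cast_natCast, one_mul, mul_assoc, ← (Nat.cast_commute _ _).eq]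
  rw [((Commute.neg_one_left (S ^ k)).pow_left _).left_comm, (Nat.cast_commute _ _).left_comm]

theorem gamma_zero_left_eq_zero_iff (n : ℕ) (T : A) : gamma n 0 T = 0 ↔ T ^ n = 0 := by
  have h : mulLeft ℤ (0 : A) - mulRight ℤ T = mulRight ℤ (-T) := by ext; simp
  rw [gamma_eq_pow_apply_one ℤ, h, pow_mulRight, mulRight_apply, one_mul, neg_pow,
    neg_one_pow_mul_eq_zero_iff]

theorem gamma_smul_smul (R : Type*) [CommRing R] [Algebra R A] (n : ℕ) (c : R) (S T : A) :
    gamma n (c • S) (c • T) = c ^ n • gamma n S T := by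
  have h : mulLeft R (c • S) - mulRight R (c • T) = c • (mulLeft R S - mulRight R T) := by
    ext; simp [smul_sub]
  rw [gamma_eq_pow_apply_one R, gamma_eq_pow_apply_one R, h, smul_pow, LinearMap.smul_apply]

-- `star` is only additive, hence the ℤ-linear operators.
theorem star_gamma [StarRing A] (n : ℕ) (S T : A) :
    star (gamma n S T) = (-1) ^ n * gamma n (star T) (star S) := by
  have hsemi : Function.Semiconj star ⇑(mulLeft ℤ S - mulRight ℤ T)
      ⇑(-(mulLeft ℤ (star T) - mulRight ℤ (star S))) := fun x => by simp
  rw [gamma_eq_pow_apply_one ℤ, gamma_eq_pow_apply_one ℤ, Module.End.coe_pow,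
    hsemi.iterate_right n 1, star_one, ← Module.End.coe_pow, ← neg_one_zsmul, smul_pow,
    LinearMap.smul_apply, zsmul_eq_mul, Int.cast_pow, Int.cast_neg, Int.cast_one]

theorem gamma_sub_sub_eq_zero {S S' T T' : A} (hS : Commute S S') (hT : Commute T T') {m n : ℕ}
    (h : gamma m S T = 0) (h' : gamma n S' T' = 0) :
    gamma (m + n - 1) (S - S') (T - T') = 0 := by
  rw [gamma_eq_pow_apply_one ℤ] at h h' ⊢
  set u := mulLeft ℤ S - mulRight ℤ T
  set v := mulLeft ℤ S' - mulRight ℤ T'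
  have huv : Commute u v := by
    ext x
    simp only [u, v, Module.End.mul_apply, LinearMap.sub_apply, mulLeft_apply, mulRight_apply,
      mul_sub, sub_mul, ← mul_assoc, hS.eq]
    simp only [mul_assoc, hT.eq]
    abel
  have hdiff : mulLeft ℤ (S - S') - mulRight ℤ (T - T') = u + -v := by
    ext; simp [u, v, sub_mul, mul_sub]; abel
  have hv : ((-v) ^ n) 1 = 0 := by rw [neg_pow, Module.End.mul_apply, h', map_zero]
  rw [hdiff]
  exact huv.neg_right.add_pow_apply_eq_zero_of_add_le_succ_of_pow_apply_eq_zero h hv (by omega)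

theorem isNilpotent_of_gamma_eq_zero_of_gamma_smul_eq_zero {𝕜 : Type*} [Field 𝕜] [Algebra 𝕜 A]
    {n : ℕ} {S T : A} {c : 𝕜} (hc : c ≠ 1) (h : gamma n S T = 0) (h' : gamma n S (c • T) = 0) :
    IsNilpotent T := by
  have hsub := gamma_sub_sub_eq_zero (Commute.refl S) ((Commute.refl T).smul_right c) h h'
  rw [sub_self, ← one_smul 𝕜 T, smul_smul, mul_one, ← sub_smul, gamma_zero_left_eq_zero_iff,
    smul_pow] at hsub
  exact ⟨_, (smul_eq_zero.mp hsub).resolve_left (pow_ne_zero _ (sub_ne_zero.mpr hc.symm))⟩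

end gamma

theorem helton_scalar_unimodular_general
    {H : Type*} [NormedAddCommGroup H] [InnerProductSpace ℂ H] [CompleteSpace H]
    (T : H →L[ℂ] H) (hT : ¬IsNilpotent T) (lam : ℂ) (n : ℕ)
    (h : gamma n (ContinuousLinearMap.adjoint T) (lam • T) = 0) :
    ‖lam‖ = 1 := by
  rw [← ContinuousLinearMap.star_eq_adjoint] at h
  have h_adj : gamma n (star lam • star T) T = 0 := by
    simpa [star_gamma, star_smul] using congrArg star h
  have h_scaled : gamma n (star lam • star T) ((star lam * lam) • T) = 0 := by
    rw [mul_smul, gamma_smul_smul ℂ, h, smul_zero]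
  by_contra hne
  refine hT (isNilpotent_of_gamma_eq_zero_of_gamma_smul_eq_zero ?_ h_adj h_scaled)
  intro hc
  rw [Complex.star_def, Complex.conj_mul'] at hc
  exact hne ((pow_eq_one_iff_of_nonneg (norm_nonneg lam) two_ne_zero).mp (mod_cast hc))

/-- Lemma 5.3: if `T ∈ B(H)` is not nilpotent and `λT` lies in the `n`-th Helton class
of `T*` (i.e. `γ_n(T*, λT) = 0`), then `|λ| = 1`. -/
theorem helton_scalar_unimodular
    {H : Type*} [NormedAddCommGroup H] [InnerProductSpace ℂ H] [CompleteSpace H]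
    (T : H →L[ℂ] H) (hT : ¬IsNilpotent T) (lam : ℂ) (n : ℕ) (hn : 1 ≤ n)
    (h : gamma n (ContinuousLinearMap.adjoint T) (lam • T) = 0) :
    ‖lam‖ = 1 :=
  helton_scalar_unimodular_general T hT lam n h
end
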